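/- arXiv:1709.02407 — 6 statements merged into one kernel-verified Lean document; each statement's English description precedes it below -/
import Mathlib

section
/- For every real t, the time-evolution operator admits the spectral decomposition U_qs(t) = Σ_{k ∈ {0,1,2,4,6,7}} e_k e_k† + (e^{−it}/2)·(e₃ + e₅)(e₃ + e₅)† + (e^{it}/2)·(e₃ − e₅)(e₃ − e₅)†, where e_k denotes the k-th standard basis column vector of ℂ⁸. -/
open Matrix Complex

/-- The Hamiltonian of the quantum qubit switch: the 8×8 complex matrix whose only
nonzero entries are `(H_qs)_{3,5} = (H_qs)_{5,3} = 1`. -/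
noncomputable def Hqs : Matrix (Fin 8) (Fin 8) ℂ :=
  Matrix.of fun i j =>
    if (i = 3 ∧ j = 5) ∨ (i = 5 ∧ j = 3) then 1 else 0

/-- The time-evolution operator `U_qs(t) = exp(−i t H_qs)` (matrix exponential). -/
noncomputable def Uqs (t : ℝ) : Matrix (Fin 8) (Fin 8) ℂ :=
  NormedSpace.exp ((-(Complex.I * (t : ℂ))) • Hqs)

/-- The k-th standard basis column vector of ℂ⁸. -/
noncomputable def e (k : Fin 8) : Fin 8 → ℂ := Pi.single k 1

/-!
`H_qs = P₊ - P₋`, where `P± = ½ (e₃ ± e₅)(e₃ ± e₅)†` are orthogonal idempotents. For an idempotent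
`p` one has `(c p)ⁿ = cⁿ p` for `n ≥ 1`, so the exponential series collapses to
`exp (c p) = 1 - p + eᶜ p`; since `P₊ P₋ = P₋ P₊ = 0`, the exponential of `-it P₊ + it P₋` factors,
giving `U_qs(t) = (1 - P₊ - P₋) + e^{-it} P₊ + e^{it} P₋`, and `1 - P₊ - P₋` is the projection
onto the span of the remaining six basis vectors.
-/

open scoped Nat

section IdempotentExp

variable {𝕂 A : Type*} [RCLike 𝕂] [NormedRing A] [NormedAlgebra 𝕂 A] [CompleteSpace A]

theorem NormedSpace.exp_smul_of_isIdempotentElem {p : A} (hp : IsIdempotentElem p) (c : 𝕂) :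
    NormedSpace.exp (c • p) = 1 - p + NormedSpace.exp c • p := by
  have hterm (n : ℕ) : ((n ! : 𝕂)⁻¹) • (c • p) ^ n
      = (Pi.single 0 (1 - p) : ℕ → A) n + ((n ! : 𝕂)⁻¹ • c ^ n) • p := by
    rcases n with _ | n
    · simp
    · simp [smul_pow, hp.pow_succ_eq, mul_smul]
  have hsum : HasSum (fun n : ℕ => ((n ! : 𝕂)⁻¹) • (c • p) ^ n)
      (1 - p + NormedSpace.exp c • p) := by
    simp_rw [hterm]
    exact (hasSum_pi_single 0 (1 - p)).add
      ((NormedSpace.exp_series_hasSum_exp' c).smul_const p)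
  exact (NormedSpace.exp_series_hasSum_exp' (𝕂 := 𝕂) (c • p)).unique hsum

theorem NormedSpace.exp_smul_add_smul_of_isIdempotentElem {p q : A} (hp : IsIdempotentElem p)
    (hq : IsIdempotentElem q) (hpq : p * q = 0) (hqp : q * p = 0) (a b : 𝕂) :
    NormedSpace.exp (a • p + b • q)
      = 1 - p - q + NormedSpace.exp a • p + NormedSpace.exp b • q := by
  let _ := NormedAlgebra.restrictScalars ℚ 𝕂 A
  have hcomm : Commute (a • p) (b • q) := by
    simp only [Commute, SemiconjBy, smul_mul_smul_comm, hpq, hqp, smul_zero]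
  rw [NormedSpace.exp_add_of_commute hcomm, NormedSpace.exp_smul_of_isIdempotentElem hp,
    NormedSpace.exp_smul_of_isIdempotentElem hq]
  simp only [add_mul, mul_add, sub_mul, mul_sub, one_mul, mul_one, smul_mul_assoc, mul_smul_comm,
    hpq, smul_zero, sub_zero, add_zero]
  abel

end IdempotentExp

theorem Matrix.exp_smul_add_smul_of_isIdempotentElem {m 𝕂 : Type*} [Fintype m] [DecidableEq m]
    [RCLike 𝕂] {P Q : Matrix m m 𝕂} (hP : IsIdempotentElem P) (hQ : IsIdempotentElem Q)
    (hPQ : P * Q = 0) (hQP : Q * P = 0) (a b : 𝕂) :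
    NormedSpace.exp (a • P + b • Q)
      = 1 - P - Q + NormedSpace.exp a • P + NormedSpace.exp b • Q :=
  open scoped Norms.Operator in
  NormedSpace.exp_smul_add_smul_of_isIdempotentElem hP hQ hPQ hQP a b

theorem Matrix.isIdempotentElem_smul_vecMulVec {n α : Type*} [Fintype n] [CommSemiring α]
    {v w : n → α} {r : α} (h : r * (w ⬝ᵥ v) = 1) : IsIdempotentElem (r • vecMulVec v w) := by
  rw [IsIdempotentElem, smul_mul_smul_comm, vecMulVec_mul_vecMulVec, vecMulVec_smul, smul_smul,
    mul_assoc, h, mul_one]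

theorem Matrix.smul_vecMulVec_mul_smul_vecMulVec_eq_zero {l m n α : Type*} [Fintype m]
    [CommSemiring α] (r s : α) (u : l → α) {v w : m → α} (x : n → α) (h : v ⬝ᵥ w = 0) :
    (r • vecMulVec u v) * (s • vecMulVec w x) = 0 := by
  rw [Matrix.smul_mul, Matrix.mul_smul, vecMulVec_mul_vecMulVec, h, zero_smul]
  ext
  simp [vecMulVec_apply]

/-- `projPlus` and `projMinus` project onto the eigenlines `ℂ (e₃ ± e₅)` of `Hqs`. -/
noncomputable def projPlus : Matrix (Fin 8) (Fin 8) ℂ :=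
  (2⁻¹ : ℂ) • vecMulVec (e 3 + e 5) (star (e 3 + e 5))

noncomputable def projMinus : Matrix (Fin 8) (Fin 8) ℂ :=
  (2⁻¹ : ℂ) • vecMulVec (e 3 - e 5) (star (e 3 - e 5))

theorem isIdempotentElem_projPlus : IsIdempotentElem projPlus :=
  isIdempotentElem_smul_vecMulVec (by simp [e]; norm_num)

theorem isIdempotentElem_projMinus : IsIdempotentElem projMinus :=
  isIdempotentElem_smul_vecMulVec (by simp [e]; norm_num)

theorem projPlus_mul_projMinus : projPlus * projMinus = 0 :=
  smul_vecMulVec_mul_smul_vecMulVec_eq_zero _ _ _ _ (by simp [e])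

theorem projMinus_mul_projPlus : projMinus * projPlus = 0 :=
  smul_vecMulVec_mul_smul_vecMulVec_eq_zero _ _ _ _ (by simp [e])

theorem Hqs_eq_projPlus_sub_projMinus : Hqs = projPlus - projMinus := by
  ext i j
  fin_cases i <;> fin_cases j <;> simp [Hqs, projPlus, projMinus, e, vecMulVec_apply] <;> norm_num

theorem sum_vecMulVec_e_eq_one_sub_projPlus_sub_projMinus :
    ∑ k ∈ ({0, 1, 2, 4, 6, 7} : Finset (Fin 8)), vecMulVec (e k) (star (e k))
      = 1 - projPlus - projMinus := by
  ext i j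
  fin_cases i <;> fin_cases j <;> simp [projPlus, projMinus, e, vecMulVec_apply] <;> norm_num

/-- Spectral decomposition of the switch evolution operator:
`U_qs(t) = Σ_{k ∈ {0,1,2,4,6,7}} e_k e_k† + (e^{−it}/2)(e₃+e₅)(e₃+e₅)†
          + (e^{it}/2)(e₃−e₅)(e₃−e₅)†`. -/
theorem switch_spectral_decomposition (t : ℝ) :
    Uqs t =
      (∑ k ∈ ({0, 1, 2, 4, 6, 7} : Finset (Fin 8)), vecMulVec (e k) (star (e k)))
      + (Complex.exp (-(Complex.I * (t : ℂ))) / 2) •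
          vecMulVec (e 3 + e 5) (star (e 3 + e 5))
      + (Complex.exp (Complex.I * (t : ℂ)) / 2) •
          vecMulVec (e 3 - e 5) (star (e 3 - e 5)) := by
  have hU : Uqs t = NormedSpace.exp ((-(I * t)) • projPlus + (I * t) • projMinus) := by
    rw [Uqs, Hqs_eq_projPlus_sub_projMinus, smul_sub, sub_eq_add_neg, ← neg_smul, neg_neg]
  rw [hU, exp_smul_add_smul_of_isIdempotentElem isIdempotentElem_projPlus
    isIdempotentElem_projMinus projPlus_mul_projMinus projMinus_mul_projPlus,
    sum_vecMulVec_e_eq_one_sub_projPlus_sub_projMinus, projPlus, projMinus, smul_smul, smul_smul,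
    ← div_eq_mul_inv, ← div_eq_mul_inv, Complex.exp_eq_exp_ℂ]
end

section
/- Let A = (α₀, β₀) and B = (α₁, β₁) be vectors in ℂ². For every real t, the vector U_qs(t) · (A ⊗ B ⊗ (0,1)) ∈ ℂ⁸ has components: entry 1 equals α₀α₁, entry 3 equals cos(t)·α₀β₁ − i·sin(t)·α₁β₀, entry 5 equals cos(t)·α₁β₀ − i·sin(t)·α₀β₁, entry 7 equals β₀β₁, and all other entries are 0. -/
/-!
`H_qs` swaps the basis vectors `e₃ = |011⟩` and `e₅ = |101⟩` and kills the others, so `H³ = H`.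
For such an element the even and odd parts of the exponential series collapse to
`exp (z • H) = 1 + (cosh z - 1) • H² + sinh z • H`; at `z = -i t` this is the identity off
`span {e₃, e₅}` and the rotation `cos t - i sin t • H` on it.
-/

open Matrix Complex

def tensor3 (A B C : Fin 2 → ℂ) : Fin 8 → ℂ := fun i =>
  A ⟨i.val / 4, by omega⟩ * B ⟨i.val / 2 % 2, by omega⟩ * C ⟨i.val % 2, by omega⟩

section PowThreeEqSelf

variable {M : Type*} [Monoid M] {a : M}

theorem pow_two_mul_add_one_of_pow_three_eq_self (ha : a ^ 3 = a) (n : ℕ) :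
    a ^ (2 * n + 1) = a := by
  induction n with
  | zero => simp
  | succ n ih => rw [mul_add, mul_one, add_right_comm, pow_add, ih, ← pow_succ', ha]

theorem pow_two_mul_add_two_of_pow_three_eq_self (ha : a ^ 3 = a) (n : ℕ) :
    a ^ (2 * n + 2) = a ^ 2 := by
  rw [pow_succ, pow_two_mul_add_one_of_pow_three_eq_self ha, sq]

end PowThreeEqSelf

open NormedSpace Nat in
theorem exp_smul_of_pow_three_eq_self {𝔸 : Type*} [Ring 𝔸] [Algebra ℂ 𝔸] [TopologicalSpace 𝔸]
    [IsTopologicalRing 𝔸] [ContinuousSMul ℂ 𝔸] [T2Space 𝔸] {a : 𝔸} (ha : a ^ 3 = a) (z : ℂ) :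
    exp (z • a) = 1 + (cosh z - 1) • a ^ 2 + sinh z • a := by
  have hterm : ∀ n : ℕ, (n !⁻¹ : ℂ) • (z • a) ^ n = (z ^ n / n !) • a ^ n := fun n => by
    rw [smul_pow, smul_smul, div_eq_inv_mul]
  have heven : HasSum (fun n : ℕ => (z ^ (2 * n) / (2 * n)! : ℂ) • a ^ (2 * n))
      (cosh z • a ^ 2 + (1 - a ^ 2)) := by
    refine ((hasSum_cosh z).smul_const (a ^ 2)).add (hasSum_ite_eq 0 (1 - a ^ 2)) |>.congr_fun ?_
    rintro (_ | n)
    · simp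
    · simp [pow_two_mul_add_two_of_pow_three_eq_self ha, mul_add]
  have hodd : HasSum (fun n : ℕ => (z ^ (2 * n + 1) / (2 * n + 1)! : ℂ) • a ^ (2 * n + 1))
      (sinh z • a) := by
    simpa only [pow_two_mul_add_one_of_pow_three_eq_self ha] using
      (hasSum_sinh z).smul_const a
  rw [exp_eq_tsum ℂ]
  simp only [hterm]
  rw [(HasSum.even_add_odd (f := fun n => (z ^ n / n ! : ℂ) • a ^ n) heven hodd).tsum_eq,
    sub_smul, one_smul]
  abel

theorem Hqs_mulVec (w : Fin 8 → ℂ) : Hqs *ᵥ w = ![0, 0, 0, w 5, 0, w 3, 0, 0] := by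
  funext i
  fin_cases i <;> simp [Hqs, mulVec, dotProduct]

theorem Hqs_pow_three : Hqs ^ 3 = Hqs := by
  refine ext_of_mulVec_single fun i => ?_
  simp only [pow_succ, pow_zero, one_mul, ← mulVec_mulVec, Hqs_mulVec]
  rfl

theorem tensor3_ket_one (α₀ β₀ α₁ β₁ : ℂ) :
    tensor3 ![α₀, β₀] ![α₁, β₁] ![0, 1] = ![0, α₀ * α₁, 0, α₀ * β₁, 0, β₀ * α₁, 0, β₀ * β₁] := by
  funext i
  fin_cases i <;> simp [tensor3]

theorem Uqs_eq (t : ℝ) :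
    Uqs t = 1 + (Real.cos t - 1 : ℂ) • Hqs ^ 2 - (I * Real.sin t) • Hqs := by
  have hcosh : cosh (-(I * t)) = Real.cos t := by
    rw [cosh_neg, mul_comm, cosh_mul_I, ofReal_cos]
  have hsinh : sinh (-(I * t)) = -(I * Real.sin t) := by
    rw [sinh_neg, mul_comm, sinh_mul_I, ofReal_sin, mul_comm]
  rw [Uqs, exp_smul_of_pow_three_eq_self Hqs_pow_three, hcosh, hsinh, neg_smul, ← sub_eq_add_neg]

/-- With the control (third) qubit in state |1⟩, the action of the switch at time t
on the product state `A ⊗ B ⊗ |1⟩` produces the explicitly given vector. -/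
theorem switch_control_one (α₀ β₀ α₁ β₁ : ℂ) (t : ℝ) :
    (Uqs t).mulVec (tensor3 ![α₀, β₀] ![α₁, β₁] ![0, 1]) =
      ![0,
        α₀ * α₁,
        0,
        (Real.cos t : ℂ) * (α₀ * β₁) - Complex.I * (Real.sin t : ℂ) * (α₁ * β₀),
        0,
        (Real.cos t : ℂ) * (α₁ * β₀) - Complex.I * (Real.sin t : ℂ) * (α₀ * β₁),
        0,
        β₀ * β₁] := by
  rw [Uqs_eq, tensor3_ket_one, sub_mulVec, add_mulVec, smul_mulVec, smul_mulVec, sq,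
    ← mulVec_mulVec, Hqs_mulVec, Hqs_mulVec, one_mulVec]
  funext i
  fin_cases i <;> simp <;> ring
end

section
/- Let α₀, β₀ ∈ ℂ with |α₀|² + |β₀|² = 1, t ∈ ℝ, and let M(t) be the 2×2 complex matrix [[α₀, −i·sin(t)·β₀], [cos(t)·β₀, 0]]. Then the characteristic polynomial of M(t)·M(t)† equals X² − X + |β₀|⁴·sin²(2t)/4; consequently the eigenvalues of M(t)M(t)† are (1 ± √(1 − |β₀|⁴ sin²(2t)))/2, and the singular values of M(t) (the Schmidt coefficients of the corresponding two-qubit state) are √((1 ± √(1 − |β₀|⁴ sin²(2t)))/2). -/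
open Matrix Polynomial Complex

/-- Coefficient matrix of the switch two-qubit state ψ(t):
`M(t) = [[α₀, −i sin(t) β₀], [cos(t) β₀, 0]]`. -/
noncomputable def Mcoef (α₀ β₀ : ℂ) (t : ℝ) : Matrix (Fin 2) (Fin 2) ℂ :=
  !![α₀, -Complex.I * (Real.sin t : ℂ) * β₀; (Real.cos t : ℂ) * β₀, 0]

/-! For a 2 × 2 matrix the characteristic polynomial is `X² − tr X + det`. Here
`tr (M M†) = ∑ |Mᵢⱼ|² = |α₀|² + |β₀|² = 1` and `det (M M†) = |det M|² = |β₀|⁴ sin² t cos² t`,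
so the eigenvalues come from the quadratic formula; they are real and nonnegative because
`0 ≤ |β₀|⁴ sin² (2t) ≤ 1`. -/

namespace Matrix

variable {m n : Type*} [Fintype m] [Fintype n]

lemma trace_mul_conjTranspose_self_eq_sum_sq_norm (A : Matrix m n ℂ) :
    (A * Aᴴ).trace = ((∑ i, ∑ j, ‖A i j‖ ^ 2 : ℝ) : ℂ) := by
  simp [trace, mul_apply, Complex.mul_conj']

lemma det_mul_conjTranspose_self [DecidableEq m] (A : Matrix m m ℂ) :
    (A * Aᴴ).det = ((‖A.det‖ ^ 2 : ℝ) : ℂ) := by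
  rw [det_mul, det_conjTranspose, Complex.star_def, Complex.mul_conj']
  push_cast; rfl

end Matrix

lemma det_Mcoef (α₀ β₀ : ℂ) (t : ℝ) :
    (Mcoef α₀ β₀ t).det = I * (Real.sin t * Real.cos t : ℝ) * β₀ ^ 2 := by
  rw [Mcoef, det_fin_two_of]; push_cast; ring

lemma trace_Mcoef_mul_conjTranspose (α₀ β₀ : ℂ) (t : ℝ) :
    (Mcoef α₀ β₀ t * (Mcoef α₀ β₀ t)ᴴ).trace = ((‖α₀‖ ^ 2 + ‖β₀‖ ^ 2 : ℝ) : ℂ) := by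
  rw [trace_mul_conjTranspose_self_eq_sum_sq_norm]
  congr 1
  simp only [Fin.sum_univ_two, Mcoef, of_apply, cons_val', cons_val_zero, cons_val_one,
    empty_val', cons_val_fin_one, norm_mul, norm_neg, norm_I, Complex.norm_real,
    Real.norm_eq_abs, norm_zero, one_mul, mul_pow, sq_abs]
  linear_combination ‖β₀‖ ^ 2 * Real.sin_sq_add_cos_sq t

lemma det_Mcoef_mul_conjTranspose (α₀ β₀ : ℂ) (t : ℝ) :
    (Mcoef α₀ β₀ t * (Mcoef α₀ β₀ t)ᴴ).det = ((‖β₀‖ ^ 4 * Real.sin (2 * t) ^ 2 / 4 : ℝ) : ℂ) := by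
  rw [det_mul_conjTranspose_self, det_Mcoef]
  congr 1
  simp only [norm_mul, norm_I, norm_pow, Complex.norm_real, Real.norm_eq_abs, Real.sin_two_mul,
    one_mul, mul_pow, sq_abs]
  ring

lemma eval_X_sq_sub_X_add_C_eq_zero {s r : ℝ} (h : (2 * r - 1) ^ 2 = 1 - s) :
    (X ^ 2 - X + C ((s / 4 : ℝ) : ℂ) : ℂ[X]).eval (r : ℂ) = 0 := by
  simp only [eval_add, eval_sub, eval_pow, eval_X, eval_C]
  exact_mod_cast (by linear_combination h / 4 : r ^ 2 - r + s / 4 = 0)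

/-- The characteristic polynomial of M(t)M(t)† is X² − X + |β₀|⁴ sin²(2t)/4; hence the
eigenvalues of M(t)M(t)† are (1 ± √(1 − |β₀|⁴ sin²(2t)))/2 and the singular values of
M(t) (the Schmidt coefficients) are √((1 ± √(1 − |β₀|⁴ sin²(2t)))/2). -/
theorem schmidt_coefficients_of_switch_state (α₀ β₀ : ℂ) (t : ℝ)
    (hnorm : ‖α₀‖ ^ 2 + ‖β₀‖ ^ 2 = 1) :
    (Mcoef α₀ β₀ t * (Mcoef α₀ β₀ t)ᴴ).charpoly =
        X ^ 2 - X + C ((‖β₀‖ ^ 4 * Real.sin (2 * t) ^ 2 / 4 : ℝ) : ℂ) ∧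
    ((Mcoef α₀ β₀ t * (Mcoef α₀ β₀ t)ᴴ).charpoly.eval
        ((((1 + Real.sqrt (1 - ‖β₀‖ ^ 4 * Real.sin (2 * t) ^ 2)) / 2 : ℝ)) : ℂ)
      = 0) ∧
    ((Mcoef α₀ β₀ t * (Mcoef α₀ β₀ t)ᴴ).charpoly.eval
        ((((1 - Real.sqrt (1 - ‖β₀‖ ^ 4 * Real.sin (2 * t) ^ 2)) / 2 : ℝ)) : ℂ)
      = 0) ∧
    ((Mcoef α₀ β₀ t * (Mcoef α₀ β₀ t)ᴴ).charpoly.eval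
        (((Real.sqrt ((1 + Real.sqrt (1 - ‖β₀‖ ^ 4 * Real.sin (2 * t) ^ 2)) / 2)
            ^ 2 : ℝ)) : ℂ) = 0) ∧
    ((Mcoef α₀ β₀ t * (Mcoef α₀ β₀ t)ᴴ).charpoly.eval
        (((Real.sqrt ((1 - Real.sqrt (1 - ‖β₀‖ ^ 4 * Real.sin (2 * t) ^ 2)) / 2)
            ^ 2 : ℝ)) : ℂ) = 0) := by
  set s := ‖β₀‖ ^ 4 * Real.sin (2 * t) ^ 2
  have hcharpoly :
      (Mcoef α₀ β₀ t * (Mcoef α₀ β₀ t)ᴴ).charpoly = X ^ 2 - X + C ((s / 4 : ℝ) : ℂ) := by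
    rw [charpoly_fin_two, trace_Mcoef_mul_conjTranspose, hnorm, det_Mcoef_mul_conjTranspose,
      ofReal_one, C_1, one_mul]
  have hs0 : 0 ≤ s := by positivity
  have hs1 : s ≤ 1 := by
    have hβ : ‖β₀‖ ^ 2 ≤ 1 := by nlinarith [sq_nonneg ‖α₀‖]
    calc s = (‖β₀‖ ^ 2) ^ 2 * Real.sin (2 * t) ^ 2 := by ring
      _ ≤ 1 := mul_le_one₀ (pow_le_one₀ (by positivity) hβ) (by positivity) (Real.sin_sq_le_one _)
  have hsqrt : √(1 - s) ^ 2 = 1 - s := Real.sq_sqrt (by linarith)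
  have hsqrt_le_one : √(1 - s) ≤ 1 := Real.sqrt_le_one.mpr (by linarith)
  have hplus : (Mcoef α₀ β₀ t * (Mcoef α₀ β₀ t)ᴴ).charpoly.eval
      (((1 + √(1 - s)) / 2 : ℝ) : ℂ) = 0 := by
    rw [hcharpoly]; exact eval_X_sq_sub_X_add_C_eq_zero (by linear_combination hsqrt)
  have hminus : (Mcoef α₀ β₀ t * (Mcoef α₀ β₀ t)ᴴ).charpoly.eval
      (((1 - √(1 - s)) / 2 : ℝ) : ℂ) = 0 := by
    rw [hcharpoly]; exact eval_X_sq_sub_X_add_C_eq_zero (by linear_combination hsqrt)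
  refine ⟨hcharpoly, hplus, hminus, ?_, ?_⟩
  · rwa [Real.sq_sqrt (by positivity)]
  · rwa [Real.sq_sqrt (by linarith)]
end

section
/- Let α₀, β₀ ∈ ℂ with |α₀|² + |β₀|² = 1, t ∈ ℝ, ρ(t) = ψ(t)ψ(t)†, and let ρ^{T_B}(t) be the partial transpose of ρ(t) on the second qubit, i.e. the 4×4 matrix with (ρ^{T_B})_{2i+k, 2j+l} = ρ_{2i+l, 2j+k} for i,j,k,l ∈ {0,1}. Then the characteristic polynomial of ρ^{T_B}(t) equals (X² − X + |β₀|⁴ sin²(2t)/4)·(X² − |β₀|⁴ sin²(2t)/4); hence the eigenvalues of ρ^{T_B}(t) are ±|β₀|²·sin(t)·cos(t) together with (1 ± √(1 − |β₀|⁴ sin²(2t)))/2. -/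
open Matrix Polynomial Complex

/-- The two-qubit state of the switch at time t:
ψ(t) = (α₀, −i sin(t) β₀, cos(t) β₀, 0). -/
noncomputable def ψ (α₀ β₀ : ℂ) (t : ℝ) : Fin 4 → ℂ :=
  ![α₀, -Complex.I * (Real.sin t : ℂ) * β₀, (Real.cos t : ℂ) * β₀, 0]

/-- The density matrix ρ(t) = ψ(t)ψ(t)†. -/
noncomputable def ρ (α₀ β₀ : ℂ) (t : ℝ) : Matrix (Fin 4) (Fin 4) ℂ :=
  vecMulVec (ψ α₀ β₀ t) (star (ψ α₀ β₀ t))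

/-- Partial transpose on the second qubit:
`(ρ^{T_B})_{2i+k, 2j+l} = ρ_{2i+l, 2j+k}`. -/
noncomputable def ρTB (α₀ β₀ : ℂ) (t : ℝ) : Matrix (Fin 4) (Fin 4) ℂ :=
  Matrix.of fun r c =>
    ρ α₀ β₀ t ⟨2 * (r.val / 2) + c.val % 2, by omega⟩
      ⟨2 * (c.val / 2) + r.val % 2, by omega⟩

/-! The characteristic polynomial of the partial transpose of a rank-one matrix `u vᵀ` on
`R² ⊗ R²` is `(X² − (u ⬝ᵥ v) X + D) (X² − D)`, where `D` is the product of the determinants of the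
2 × 2 coefficient matrices of `u` and `v`; this is a polynomial identity, checked by expanding the
4 × 4 determinant. For the switch state `u ⬝ᵥ v = ‖ψ‖² = 1` and `D = |β₀|⁴ sin² t cos² t`, and the
roots of the two quadratic factors are the stated eigenvalues. -/

namespace Matrix

theorem det_fin_four {R : Type*} [CommRing R] (A : Matrix (Fin 4) (Fin 4) R) :
    A.det =
      A 0 0 * (A 1 1 * A 2 2 * A 3 3 - A 1 1 * A 2 3 * A 3 2 - A 1 2 * A 2 1 * A 3 3
        + A 1 2 * A 2 3 * A 3 1 + A 1 3 * A 2 1 * A 3 2 - A 1 3 * A 2 2 * A 3 1)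
      - A 0 1 * (A 1 0 * A 2 2 * A 3 3 - A 1 0 * A 2 3 * A 3 2 - A 1 2 * A 2 0 * A 3 3
        + A 1 2 * A 2 3 * A 3 0 + A 1 3 * A 2 0 * A 3 2 - A 1 3 * A 2 2 * A 3 0)
      + A 0 2 * (A 1 0 * A 2 1 * A 3 3 - A 1 0 * A 2 3 * A 3 1 - A 1 1 * A 2 0 * A 3 3
        + A 1 1 * A 2 3 * A 3 0 + A 1 3 * A 2 0 * A 3 1 - A 1 3 * A 2 1 * A 3 0)
      - A 0 3 * (A 1 0 * A 2 1 * A 3 2 - A 1 0 * A 2 2 * A 3 1 - A 1 1 * A 2 0 * A 3 2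
        + A 1 1 * A 2 2 * A 3 0 + A 1 2 * A 2 0 * A 3 1 - A 1 2 * A 2 1 * A 3 0) := by
  rw [det_succ_row_zero]
  simp only [Nat.succ_eq_add_one, Nat.reduceAdd, Fin.isValue, det_fin_three, submatrix_apply,
    Fin.succ_zero_eq_one, Fin.succAbove, Fin.castSucc_zero, Fin.succ_one_eq_two, Fin.castSucc_one,
    show Fin.succ (2 : Fin 3) = 3 from rfl, show Fin.castSucc (2 : Fin 3) = 2 from rfl,
    Fin.sum_univ_succ, Fin.coe_ofNat_eq_mod, Nat.zero_mod, pow_zero, one_mul, lt_self_iff_false,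
    ↓reduceIte, not_lt_zero, Fin.val_succ, Fin.succ_pos, zero_add, pow_one, neg_mul,
    Fin.lt_one_iff, Fin.reduceEq, even_two, Even.neg_pow, one_pow, Fin.reduceLT,
    Finset.univ_unique, Fin.default_eq_zero, Fin.val_eq_zero, Finset.sum_singleton]
  ring

def partialTransposeSnd {α : Type*} (M : Matrix (Fin 4) (Fin 4) α) : Matrix (Fin 4) (Fin 4) α :=
  of fun r c => M ⟨2 * (r.val / 2) + c.val % 2, by omega⟩ ⟨2 * (c.val / 2) + r.val % 2, by omega⟩

end Matrix

/-- The determinant of the coefficient matrix `(u (2 i + j))ᵢⱼ`; for a normalized state `u`,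
`2 ‖coeffDet u‖` is its concurrence. -/
def coeffDet {R : Type*} [CommRing R] (u : Fin 4 → R) : R :=
  u 0 * u 3 - u 1 * u 2

theorem coeffDet_star {R : Type*} [CommRing R] [StarRing R] (u : Fin 4 → R) :
    coeffDet (star u) = star (coeffDet u) := by
  simp only [coeffDet, Pi.star_apply, star_sub, star_mul']

theorem charpoly_partialTransposeSnd_vecMulVec {R : Type*} [CommRing R] (u v : Fin 4 → R) :
    (partialTransposeSnd (vecMulVec u v)).charpoly =
      (X ^ 2 - C (u ⬝ᵥ v) * X + C (coeffDet u * coeffDet v)) *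
        (X ^ 2 - C (coeffDet u * coeffDet v)) := by
  rw [charpoly, det_fin_four]
  simp only [charmatrix_apply, partialTransposeSnd, vecMulVec_apply, of_apply, diagonal_apply,
    ↓reduceIte, Fin.isValue, Fin.coe_ofNat_eq_mod, Nat.zero_mod, Nat.zero_div, mul_zero, add_zero,
    Fin.zero_eta, map_mul, Nat.one_mod, Nat.reduceDiv, Nat.mod_succ, zero_add, Fin.mk_one,
    Nat.reduceMod, Order.lt_two_iff, zero_le, Nat.div_self, mul_one, Nat.mod_self,
    Fin.reduceFinMk, Nat.reduceAdd, Fin.reduceEq, zero_sub, mul_neg, neg_mul, neg_neg,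
    zero_ne_one, one_ne_zero, sub_neg_eq_add, dotProduct, Fin.sum_univ_four, map_add, coeffDet,
    map_sub]
  ring

theorem isRoot_X_sq_sub_C_of_sq_eq {R : Type*} [CommRing R] {q r : R} (h : r ^ 2 = q) :
    (X ^ 2 - C q).IsRoot r := by
  simp [h]

theorem isRoot_X_sq_sub_X_add_C_of_sq_eq {K : Type*} [Field K] [NeZero (2 : K)] {q s : K}
    (h : s ^ 2 = 1 - 4 * q) : (X ^ 2 - X + C q).IsRoot ((1 + s) / 2) := by
  simp only [IsRoot, eval_add, eval_sub, eval_pow, eval_X, eval_C]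
  field_simp
  linear_combination h

theorem dotProduct_ψ_star {α₀ β₀ : ℂ} (hnorm : ‖α₀‖ ^ 2 + ‖β₀‖ ^ 2 = 1) (t : ℝ) :
    ψ α₀ β₀ t ⬝ᵥ star (ψ α₀ β₀ t) = 1 := by
  have h : ‖α₀‖ ^ 2 + (|Real.sin t| * ‖β₀‖) ^ 2 + (|Real.cos t| * ‖β₀‖) ^ 2 = 1 := by
    rw [mul_pow, mul_pow, sq_abs, sq_abs]
    linear_combination hnorm + ‖β₀‖ ^ 2 * Real.sin_sq_add_cos_sq t
  simp only [dotProduct, ψ, neg_mul, Pi.star_apply, RCLike.star_def, mul_conj', Fin.sum_univ_four,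
    Fin.isValue, cons_val_zero, cons_val_one, norm_neg, Complex.norm_mul, norm_I, norm_real,
    Real.norm_eq_abs, one_mul, cons_val, norm_zero, ofReal_zero, ne_eq, OfNat.ofNat_ne_zero,
    not_false_eq_true, zero_pow, add_zero]
  exact_mod_cast h

theorem coeffDet_ψ (α₀ β₀ : ℂ) (t : ℝ) :
    coeffDet (ψ α₀ β₀ t) = I * Real.sin t * Real.cos t * β₀ ^ 2 := by
  simp only [coeffDet, ψ, neg_mul, Fin.isValue, cons_val_zero, cons_val, mul_zero, cons_val_one,
    sub_neg_eq_add, zero_add]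
  ring

theorem coeffDet_ψ_mul_star (α₀ β₀ : ℂ) (t : ℝ) :
    coeffDet (ψ α₀ β₀ t) * coeffDet (star (ψ α₀ β₀ t)) =
      ((‖β₀‖ ^ 4 * Real.sin (2 * t) ^ 2 / 4 : ℝ) : ℂ) := by
  rw [coeffDet_star, RCLike.star_def, mul_conj', coeffDet_ψ, ← ofReal_pow]
  congr 1
  simp only [Complex.norm_mul, norm_I, norm_real, Real.norm_eq_abs, one_mul, norm_pow, mul_pow,
    sq_abs, Real.sin_two_mul]
  ring

theorem charpoly_ρTB {α₀ β₀ : ℂ} (hnorm : ‖α₀‖ ^ 2 + ‖β₀‖ ^ 2 = 1) (t : ℝ) :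
    (ρTB α₀ β₀ t).charpoly =
        (X ^ 2 - X + C ((‖β₀‖ ^ 4 * Real.sin (2 * t) ^ 2 / 4 : ℝ) : ℂ)) *
        (X ^ 2 - C ((‖β₀‖ ^ 4 * Real.sin (2 * t) ^ 2 / 4 : ℝ) : ℂ)) := by
  change (partialTransposeSnd (ρ α₀ β₀ t)).charpoly = _
  rw [ρ, charpoly_partialTransposeSnd_vecMulVec, dotProduct_ψ_star hnorm, coeffDet_ψ_mul_star,
    map_one, one_mul]

/-- The characteristic polynomial of the partial transpose of ρ(t) is
(X² − X + |β₀|⁴sin²(2t)/4)(X² − |β₀|⁴sin²(2t)/4); hence its eigenvalues are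
±|β₀|² sin(t)cos(t) together with (1 ± √(1 − |β₀|⁴ sin²(2t)))/2. -/
theorem ppt_of_switch_state (α₀ β₀ : ℂ) (t : ℝ)
    (hnorm : ‖α₀‖ ^ 2 + ‖β₀‖ ^ 2 = 1) :
    (ρTB α₀ β₀ t).charpoly =
        (X ^ 2 - X + C ((‖β₀‖ ^ 4 * Real.sin (2 * t) ^ 2 / 4 : ℝ) : ℂ)) *
        (X ^ 2 - C ((‖β₀‖ ^ 4 * Real.sin (2 * t) ^ 2 / 4 : ℝ) : ℂ)) ∧
    (ρTB α₀ β₀ t).charpoly.eval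
        (((‖β₀‖ ^ 2 * Real.sin t * Real.cos t : ℝ)) : ℂ) = 0 ∧
    (ρTB α₀ β₀ t).charpoly.eval
        (((-(‖β₀‖ ^ 2 * Real.sin t * Real.cos t) : ℝ)) : ℂ) = 0 ∧
    (ρTB α₀ β₀ t).charpoly.eval
        ((((1 + Real.sqrt (1 - ‖β₀‖ ^ 4 * Real.sin (2 * t) ^ 2)) / 2 : ℝ)) : ℂ)
      = 0 ∧
    (ρTB α₀ β₀ t).charpoly.eval
        ((((1 - Real.sqrt (1 - ‖β₀‖ ^ 4 * Real.sin (2 * t) ^ 2)) / 2 : ℝ)) : ℂ)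
      = 0 := by
  set q : ℝ := ‖β₀‖ ^ 4 * Real.sin (2 * t) ^ 2 / 4
  set r : ℝ := ‖β₀‖ ^ 2 * Real.sin t * Real.cos t
  set s : ℝ := Real.sqrt (1 - ‖β₀‖ ^ 4 * Real.sin (2 * t) ^ 2)
  have hr : (r : ℂ) ^ 2 = q := by
    norm_cast
    simp only [q, r, Real.sin_two_mul]
    ring
  have hs : (s : ℂ) ^ 2 = 1 - 4 * q := by
    have hβ : ‖β₀‖ ^ 2 ≤ 1 := by nlinarith [sq_nonneg ‖α₀‖]
    have hle : ‖β₀‖ ^ 4 * Real.sin (2 * t) ^ 2 ≤ 1 := by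
      rw [show ‖β₀‖ ^ 4 = (‖β₀‖ ^ 2) ^ 2 by ring]
      exact mul_le_one₀ (pow_le_one₀ (by positivity) hβ) (by positivity) (Real.sin_sq_le_one _)
    norm_cast
    rw [Real.sq_sqrt (by linarith)]
    ring
  have hs' : ((-s : ℝ) : ℂ) ^ 2 = 1 - 4 * q := by rw [ofReal_neg, neg_sq, hs]
  rw [charpoly_ρTB hnorm]
  refine ⟨rfl, ?_, ?_, ?_, ?_⟩
  · exact root_mul_left_of_isRoot _ (isRoot_X_sq_sub_C_of_sq_eq hr)
  · exact root_mul_left_of_isRoot _ (isRoot_X_sq_sub_C_of_sq_eq (by rw [ofReal_neg, neg_sq, hr]))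
  · exact root_mul_right_of_isRoot _ (by exact_mod_cast isRoot_X_sq_sub_X_add_C_of_sq_eq hs)
  · exact root_mul_right_of_isRoot _ (by exact_mod_cast isRoot_X_sq_sub_X_add_C_of_sq_eq hs')
end

section
/- Let α₀, β₀ ∈ ℂ with |α₀|² + |β₀|² = 1, t ∈ ℝ, and let ρ_A(t) be the 2×2 reduced density matrix of ψ(t) obtained by tracing out the second qubit. Then ρ_A(t) = [[|α₀|² + sin²(t)|β₀|², α₀·conj(cos(t)β₀)], [conj(α₀)·cos(t)β₀, cos²(t)|β₀|²]], its characteristic polynomial equals X² − X + |β₀|⁴ sin²(2t)/4, and its eigenvalues are (1 ± √(2|α₀β₀|² + |α₀|⁴ + |β₀|⁴ cos²(2t)))/2, which under the normalization |α₀|² + |β₀|² = 1 equal (1 ± √(1 − |β₀|⁴ sin²(2t)))/2. -/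
/-!
Tracing out the second qubit leaves a 2 × 2 matrix whose trace is `‖α₀‖² + ‖β₀‖² = 1` and whose
determinant is `(sin t cos t ‖β₀‖²)² = ‖β₀‖⁴ sin²(2t) / 4`, since the off-diagonal coherence
`α₀ cos t β̄₀` cancels the `‖α₀‖²` part of the diagonal product. Hence the characteristic polynomial
is `X² - X + q` with `1 - 4q = 1 - ‖β₀‖⁴ sin²(2t)`, whose roots are `(1 ± √(1 - 4q)) / 2`; the
other form of the discriminant agrees with it because `(‖α₀‖² + ‖β₀‖²)² = 1`.
-/

open Matrix Polynomial Complex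

/-- The reduced density matrix on the first qubit (partial trace over the second):
`(ρ_A)_{i,j} = Σ_k ρ_{2i+k, 2j+k}`. -/
noncomputable def ρA (α₀ β₀ : ℂ) (t : ℝ) : Matrix (Fin 2) (Fin 2) ℂ :=
  Matrix.of fun i j => ∑ k : Fin 2,
    ρ α₀ β₀ t ⟨2 * i.val + k.val, by omega⟩ ⟨2 * j.val + k.val, by omega⟩

theorem ρA_eq (α₀ β₀ : ℂ) (t : ℝ) :
    ρA α₀ β₀ t =
      !![((‖α₀‖ ^ 2 + Real.sin t ^ 2 * ‖β₀‖ ^ 2 : ℝ) : ℂ),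
          α₀ * (starRingEnd ℂ) ((Real.cos t : ℂ) * β₀);
        (starRingEnd ℂ) α₀ * ((Real.cos t : ℂ) * β₀),
          ((Real.cos t ^ 2 * ‖β₀‖ ^ 2 : ℝ) : ℂ)] := by
  have hα := Complex.mul_conj' α₀
  have hβ := Complex.mul_conj' β₀
  ext i j
  fin_cases i <;> fin_cases j <;>
    simp [ρA, ρ, ψ, vecMulVec_apply, Fin.sum_univ_two, -Complex.ofReal_sin, -Complex.ofReal_cos]
  · linear_combination hα + (Real.sin t : ℂ) ^ 2 * hβ
      - (Real.sin t : ℂ) ^ 2 * β₀ * (starRingEnd ℂ) β₀ * Complex.I_sq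
  · ring
  · linear_combination (Real.cos t : ℂ) ^ 2 * hβ

theorem trace_ρA (α₀ β₀ : ℂ) (t : ℝ) (hnorm : ‖α₀‖ ^ 2 + ‖β₀‖ ^ 2 = 1) :
    (ρA α₀ β₀ t).trace = 1 := by
  rw [ρA_eq, trace_fin_two_of, ← Complex.ofReal_add, ← Complex.ofReal_one]
  congr 1
  linear_combination hnorm + ‖β₀‖ ^ 2 * Real.sin_sq_add_cos_sq t

theorem det_ρA (α₀ β₀ : ℂ) (t : ℝ) :
    (ρA α₀ β₀ t).det = ((‖β₀‖ ^ 4 * Real.sin (2 * t) ^ 2 / 4 : ℝ) : ℂ) := by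
  have hα := Complex.mul_conj' α₀
  have hβ := Complex.mul_conj' β₀
  rw [ρA_eq, det_fin_two_of, Real.sin_two_mul]
  simp only [map_mul, Complex.conj_ofReal]
  push_cast [-Complex.ofReal_sin, -Complex.ofReal_cos]
  linear_combination
    (-(Real.cos t : ℂ) ^ 2) * (β₀ * (starRingEnd ℂ) β₀ * hα + (‖α₀‖ : ℂ) ^ 2 * hβ)

theorem charpoly_ρA (α₀ β₀ : ℂ) (t : ℝ) (hnorm : ‖α₀‖ ^ 2 + ‖β₀‖ ^ 2 = 1) :
    (ρA α₀ β₀ t).charpoly = X ^ 2 - X + C ((‖β₀‖ ^ 4 * Real.sin (2 * t) ^ 2 / 4 : ℝ) : ℂ) := by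
  rw [charpoly_fin_two, trace_ρA α₀ β₀ t hnorm, det_ρA, C_1, one_mul]

theorem eval_X_sq_sub_X_add_C_half_one_add_eq_zero {q r : ℝ} (hr : r ^ 2 = 1 - 4 * q) :
    (X ^ 2 - X + C (q : ℂ)).eval (((1 + r) / 2 : ℝ) : ℂ) = 0 ∧
      (X ^ 2 - X + C (q : ℂ)).eval (((1 - r) / 2 : ℝ) : ℂ) = 0 := by
  simp only [eval_add, eval_sub, eval_pow, eval_X, eval_C]
  constructor <;> exact_mod_cast (by linear_combination hr / 4 : _ = (0 : ℝ))

theorem two_mul_mul_sq_add_pow_four_add_pow_four_mul_cos_sq {x y : ℝ} (h : x ^ 2 + y ^ 2 = 1)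
    (θ : ℝ) : 2 * (x * y) ^ 2 + x ^ 4 + y ^ 4 * Real.cos θ ^ 2 = 1 - y ^ 4 * Real.sin θ ^ 2 := by
  linear_combination (x ^ 2 + y ^ 2 + 1) * h + y ^ 4 * Real.sin_sq_add_cos_sq θ

/-- Explicit form, characteristic polynomial and eigenvalues of the reduced density
matrix ρ_A(t) of the switch state. -/
theorem reduced_density_matrix_of_switch_state (α₀ β₀ : ℂ) (t : ℝ)
    (hnorm : ‖α₀‖ ^ 2 + ‖β₀‖ ^ 2 = 1) :
    ρA α₀ β₀ t =
      !![((‖α₀‖ ^ 2 + Real.sin t ^ 2 * ‖β₀‖ ^ 2 : ℝ) : ℂ),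
          α₀ * (starRingEnd ℂ) ((Real.cos t : ℂ) * β₀);
        (starRingEnd ℂ) α₀ * ((Real.cos t : ℂ) * β₀),
          ((Real.cos t ^ 2 * ‖β₀‖ ^ 2 : ℝ) : ℂ)] ∧
    (ρA α₀ β₀ t).charpoly =
        X ^ 2 - X + C ((‖β₀‖ ^ 4 * Real.sin (2 * t) ^ 2 / 4 : ℝ) : ℂ) ∧
    (ρA α₀ β₀ t).charpoly.eval
        ((((1 + Real.sqrt (2 * ‖α₀ * β₀‖ ^ 2 + ‖α₀‖ ^ 4 +
            ‖β₀‖ ^ 4 * Real.cos (2 * t) ^ 2)) / 2 : ℝ)) : ℂ) = 0 ∧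
    (ρA α₀ β₀ t).charpoly.eval
        ((((1 - Real.sqrt (2 * ‖α₀ * β₀‖ ^ 2 + ‖α₀‖ ^ 4 +
            ‖β₀‖ ^ 4 * Real.cos (2 * t) ^ 2)) / 2 : ℝ)) : ℂ) = 0 ∧
    ((1 + Real.sqrt (2 * ‖α₀ * β₀‖ ^ 2 + ‖α₀‖ ^ 4 +
        ‖β₀‖ ^ 4 * Real.cos (2 * t) ^ 2)) / 2
      = (1 + Real.sqrt (1 - ‖β₀‖ ^ 4 * Real.sin (2 * t) ^ 2)) / 2) ∧
    ((1 - Real.sqrt (2 * ‖α₀ * β₀‖ ^ 2 + ‖α₀‖ ^ 4 +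
        ‖β₀‖ ^ 4 * Real.cos (2 * t) ^ 2)) / 2
      = (1 - Real.sqrt (1 - ‖β₀‖ ^ 4 * Real.sin (2 * t) ^ 2)) / 2) := by
  have hdisc := two_mul_mul_sq_add_pow_four_add_pow_four_mul_cos_sq hnorm (2 * t)
  rw [← norm_mul] at hdisc
  set D := 2 * ‖α₀ * β₀‖ ^ 2 + ‖α₀‖ ^ 4 + ‖β₀‖ ^ 4 * Real.cos (2 * t) ^ 2
  obtain ⟨hplus, hminus⟩ := eval_X_sq_sub_X_add_C_half_one_add_eq_zero
    (q := ‖β₀‖ ^ 4 * Real.sin (2 * t) ^ 2 / 4) (r := Real.sqrt D)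
    (by rw [Real.sq_sqrt (by positivity), hdisc]; ring)
  rw [charpoly_ρA α₀ β₀ t hnorm]
  exact ⟨ρA_eq α₀ β₀ t, rfl, hplus, hminus, by rw [hdisc], by rw [hdisc]⟩
end

section
/- Let α₀, β₀ ∈ ℂ with |α₀|² + |β₀|² = 1, t ∈ ℝ, and let ρ_A(t) be the 2×2 reduced density matrix of ψ(t) obtained by tracing out the second qubit. Then tr(ρ_A(t)²) = 1 − |β₀|⁴ sin²(2t)/2; consequently the I-Concurrence of ψ(t), defined as √(2(1 − tr(ρ_A(t)²))), equals |β₀|²·|sin(2t)|, and it coincides with the pure-state concurrence 2·|ψ(t)₀·ψ(t)₃ − ψ(t)₁·ψ(t)₂|. -/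
open Matrix Complex

/-!
For any two-qubit vector `v`, the reduced density matrix `ρ_A` is a 2×2 matrix with
`tr ρ_A = ‖v‖²` and `det ρ_A = |v₀v₃ − v₁v₂|²`, so `tr(ρ_A²) = (tr ρ_A)² − 2 det ρ_A` gives
`2(1 − tr(ρ_A²)) = 4|v₀v₃ − v₁v₂|²` for a unit vector: the I-Concurrence of a pure two-qubit
state is its concurrence. For the switch state, `ψ₀ψ₃ − ψ₁ψ₂ = i sin t cos t β₀²`.
-/

def reducedDensity (v : Fin 4 → ℂ) : Matrix (Fin 2) (Fin 2) ℂ :=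
  Matrix.of fun i j => ∑ k : Fin 2,
    vecMulVec v (star v) ⟨2 * i.val + k.val, by omega⟩ ⟨2 * j.val + k.val, by omega⟩

lemma ρA_eq_reducedDensity (α₀ β₀ : ℂ) (t : ℝ) : ρA α₀ β₀ t = reducedDensity (ψ α₀ β₀ t) :=
  rfl

lemma trace_reducedDensity_mul_self (v : Fin 4 → ℂ) :
    (reducedDensity v * reducedDensity v).trace =
      (((∑ i, ‖v i‖ ^ 2) ^ 2 - 2 * ‖v 0 * v 3 - v 1 * v 2‖ ^ 2 : ℝ) : ℂ) := by
  push_cast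
  simp only [← Complex.mul_conj', map_sub, map_mul, Fin.sum_univ_four, reducedDensity,
    Matrix.trace, Matrix.diag_apply, Matrix.mul_apply, Matrix.of_apply, Fin.sum_univ_two,
    vecMulVec_apply, Pi.star_apply, RCLike.star_def, Fin.val_zero, Fin.val_one, mul_zero,
    mul_one, add_zero, zero_add, Fin.zero_eta, Fin.mk_one, Nat.reduceAdd, Fin.reduceFinMk]
  ring

lemma sqrt_two_mul_one_sub_re_trace_reducedDensity_sq (v : Fin 4 → ℂ)
    (hv : ∑ i, ‖v i‖ ^ 2 = 1) :
    Real.sqrt (2 * (1 - (reducedDensity v * reducedDensity v).trace.re)) =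
      2 * ‖v 0 * v 3 - v 1 * v 2‖ := by
  rw [trace_reducedDensity_mul_self, Complex.ofReal_re, hv,
    show 2 * (1 - (1 ^ 2 - 2 * ‖v 0 * v 3 - v 1 * v 2‖ ^ 2)) =
      (2 * ‖v 0 * v 3 - v 1 * v 2‖) ^ 2 by ring]
  exact Real.sqrt_sq (by positivity)

lemma sum_norm_ψ_sq (α₀ β₀ : ℂ) (t : ℝ) :
    ∑ i, ‖ψ α₀ β₀ t i‖ ^ 2 = ‖α₀‖ ^ 2 + ‖β₀‖ ^ 2 := by
  simp [ψ, Fin.sum_univ_four, mul_pow, -Complex.ofReal_sin, -Complex.ofReal_cos]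
  linear_combination ‖β₀‖ ^ 2 * Real.sin_sq_add_cos_sq t

lemma norm_ψ_concurrence (α₀ β₀ : ℂ) (t : ℝ) :
    ‖ψ α₀ β₀ t 0 * ψ α₀ β₀ t 3 - ψ α₀ β₀ t 1 * ψ α₀ β₀ t 2‖ =
      ‖β₀‖ ^ 2 * |Real.sin (2 * t)| / 2 := by
  simp [ψ, Real.sin_two_mul, abs_mul, -Complex.ofReal_sin, -Complex.ofReal_cos]
  ring

/-- Purity and I-Concurrence of the switch state: tr(ρ_A²) = 1 − |β₀|⁴ sin²(2t)/2,
so the I-Concurrence √(2(1 − tr(ρ_A²))) equals |β₀|²·|sin(2t)|, which coincides with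
the pure-state concurrence 2|ψ₀ψ₃ − ψ₁ψ₂|. -/
theorem iconcurrence_of_switch_state (α₀ β₀ : ℂ) (t : ℝ)
    (hnorm : ‖α₀‖ ^ 2 + ‖β₀‖ ^ 2 = 1) :
    (ρA α₀ β₀ t * ρA α₀ β₀ t).trace =
        ((1 - ‖β₀‖ ^ 4 * Real.sin (2 * t) ^ 2 / 2 : ℝ) : ℂ) ∧
    Real.sqrt (2 * (1 - ((ρA α₀ β₀ t * ρA α₀ β₀ t).trace).re)) =
        ‖β₀‖ ^ 2 * |Real.sin (2 * t)| ∧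
    Real.sqrt (2 * (1 - ((ρA α₀ β₀ t * ρA α₀ β₀ t).trace).re)) =
        2 * ‖ψ α₀ β₀ t 0 * ψ α₀ β₀ t 3 - ψ α₀ β₀ t 1 * ψ α₀ β₀ t 2‖ := by
  have hψ : ∑ i, ‖ψ α₀ β₀ t i‖ ^ 2 = 1 := (sum_norm_ψ_sq α₀ β₀ t).trans hnorm
  have hpurity : (ρA α₀ β₀ t * ρA α₀ β₀ t).trace =
      ((1 - ‖β₀‖ ^ 4 * Real.sin (2 * t) ^ 2 / 2 : ℝ) : ℂ) := by
    rw [ρA_eq_reducedDensity, trace_reducedDensity_mul_self, hψ, norm_ψ_concurrence]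
    congr 1
    rw [div_pow, mul_pow, sq_abs]
    ring
  have hconc := sqrt_two_mul_one_sub_re_trace_reducedDensity_sq _ hψ
  rw [← ρA_eq_reducedDensity] at hconc
  refine ⟨hpurity, ?_, hconc⟩
  rw [hconc, norm_ψ_concurrence]
  ring
end
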